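/- V_{f,c} restricted to [0,1] is a step function with fewer than 2^n steps: there exist k < 2^n and values 0 = α_0 < α_1 < … < α_k ≤ 1 such that for every x ∈ [0,1], V_{f,c}(x) = V_{f,c}(α), where α = max{α_i : α_i ≤ x}; moreover, for every 0 ≤ i < j ≤ k, V_{f,c}(α_i) < V_{f,c}(α_j). -/
import Mathlib


open Finset

/-- The agent's demand at contract `α`: sets maximizing `α·f(S) − c(S)`. -/
def Demand (n : ℕ) (f : Finset (Fin n) → ℝ) (c : Fin n → ℝ) (α : ℝ) :
    Set (Finset (Fin n)) :=
  {S | ∀ T : Finset (Fin n), α * f T - ∑ a ∈ T, c a ≤ α * f S - ∑ a ∈ S, c a}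

/-- `V_{f,c}(α)`: the maximal value of `f` over the demand at `α`. -/
noncomputable def Vfc (n : ℕ) (f : Finset (Fin n) → ℝ) (c : Fin n → ℝ) (α : ℝ) : ℝ :=
  sSup (f '' Demand n f c α)

/-- The critical set `C_{f,c}`. -/
def Critical (n : ℕ) (f : Finset (Fin n) → ℝ) (c : Fin n → ℝ) : Set ℝ :=
  {α | 0 < α ∧ α ≤ 1 ∧
    ∀ ε : ℝ, 0 < ε → ε ≤ α → Vfc n f c (α - ε) ≠ Vfc n f c α}

variable {n : ℕ} {f : Finset (Fin n) → ℝ} {c : Fin n → ℝ}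

lemma demand_nonempty (α : ℝ) : (Demand n f c α).Nonempty := by
  obtain ⟨S, -, hS⟩ := Finset.exists_max_image (Finset.univ : Finset (Finset (Fin n)))
    (fun S => α * f S - ∑ a ∈ S, c a) ⟨∅, Finset.mem_univ _⟩
  exact ⟨S, fun T => hS T (Finset.mem_univ _)⟩

lemma demand_finite (α : ℝ) : (Demand n f c α).Finite :=
  Set.toFinite _

lemma vfc_spec (α : ℝ) : ∃ S ∈ Demand n f c α, Vfc n f c α = f S := by
  have h1 : (f '' Demand n f c α).Nonempty := (demand_nonempty α).image f
  have h2 : (f '' Demand n f c α).Finite := (demand_finite α).image f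
  obtain ⟨S, hS, hfS⟩ := h1.csSup_mem h2
  exact ⟨S, hS, hfS.symm⟩

lemma le_vfc {α : ℝ} {S : Finset (Fin n)} (hS : S ∈ Demand n f c α) :
    f S ≤ Vfc n f c α :=
  le_csSup ((demand_finite α).image f).bddAbove ⟨S, hS, rfl⟩

lemma vfc_mono : Monotone (Vfc n f c) := by
  intro α β hab
  rcases eq_or_lt_of_le hab with rfl | hlt
  · exact le_refl _
  obtain ⟨S, hS, hVS⟩ := vfc_spec (n := n) (f := f) (c := c) α
  obtain ⟨T, hT, hVT⟩ := vfc_spec (n := n) (f := f) (c := c) β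
  rw [hVS, hVT]
  have h1 := hS T
  have h2 := hT S
  nlinarith [h1, h2, hlt]

lemma demand_isClosed (S : Finset (Fin n)) :
    IsClosed {α : ℝ | S ∈ Demand n f c α} := by
  have : {α : ℝ | S ∈ Demand n f c α} =
      ⋂ T : Finset (Fin n), {α : ℝ | α * f T - ∑ a ∈ T, c a ≤ α * f S - ∑ a ∈ S, c a} := by
    ext α; simp [Demand, Set.mem_iInter]
  rw [this]
  exact isClosed_iInter fun T => isClosed_le (by fun_prop) (by fun_prop)

lemma levelset_inf_mem {v : ℝ}
    (hv : ∃ x ∈ Set.Icc (0:ℝ) 1, Vfc n f c x = v) :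
    sInf {x ∈ Set.Icc (0:ℝ) 1 | Vfc n f c x = v} ∈
      {x ∈ Set.Icc (0:ℝ) 1 | Vfc n f c x = v} := by
  set A := {x ∈ Set.Icc (0:ℝ) 1 | Vfc n f c x = v} with hA
  obtain ⟨x₀, hx₀, hgx₀⟩ := hv
  have hx₀A : x₀ ∈ A := ⟨hx₀, hgx₀⟩
  have hne : A.Nonempty := ⟨x₀, hx₀A⟩
  have hbdd : BddBelow A := ⟨0, fun x hx => hx.1.1⟩
  have h0le : 0 ≤ sInf A := le_csInf hne fun x hx => hx.1.1
  have hle1 : sInf A ≤ 1 := le_trans (csInf_le hbdd hx₀A) hx₀.2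
  have hleval : Vfc n f c (sInf A) ≤ v := by
    calc Vfc n f c (sInf A) ≤ Vfc n f c x₀ := vfc_mono (csInf_le hbdd hx₀A)
      _ = v := hgx₀
  -- closure argument
  set U := {α : ℝ | ∃ S : Finset (Fin n), f S = v ∧ S ∈ Demand n f c α} with hU
  have hUclosed : IsClosed U := by
    have : U = ⋃ S : Finset (Fin n), {α : ℝ | f S = v ∧ S ∈ Demand n f c α} := by
      ext α; simp [hU]
    rw [this]
    refine isClosed_iUnion_of_finite fun S => ?_
    by_cases hfs : f S = v
    · have : {α : ℝ | f S = v ∧ S ∈ Demand n f c α} = {α : ℝ | S ∈ Demand n f c α} := by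
        ext α; simp [hfs]
      rw [this]; exact demand_isClosed S
    · have : {α : ℝ | f S = v ∧ S ∈ Demand n f c α} = ∅ := by
        ext α; simp [hfs]
      rw [this]; exact isClosed_empty
  have hAU : A ⊆ U := by
    intro x hx
    obtain ⟨S, hS, hVS⟩ := vfc_spec (n := n) (f := f) (c := c) x
    exact ⟨S, by rw [← hVS, hx.2], hS⟩
  have hmem : sInf A ∈ U := by
    have h1 : sInf A ∈ closure A := csInf_mem_closure hne hbdd
    exact hUclosed.closure_subset (closure_mono hAU h1)
  obtain ⟨S, hfS, hSdem⟩ := hmem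
  have hgeval : v ≤ Vfc n f c (sInf A) := hfS ▸ le_vfc hSdem
  exact ⟨⟨h0le, hle1⟩, le_antisymm hleval hgeval⟩

/-- `V_{f,c}` restricted to `[0,1]` is a step function with fewer than `2^n` steps:
there are `k < 2^n` values `0 = α₀ < α₁ < … < α_k ≤ 1` such that for every `x ∈ [0,1]`,
`V_{f,c}(x) = V_{f,c}(α_i)` where `α_i = max {α_j : α_j ≤ x}`; moreover the values
`V_{f,c}(α_i)` are strictly increasing in `i`. -/
theorem Vfc_step_function (n : ℕ) (f : Finset (Fin n) → ℝ) (c : Fin n → ℝ)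
    (hf0 : f ∅ = 0) (hmono : ∀ S T : Finset (Fin n), S ⊆ T → f S ≤ f T)
    (hf01 : ∀ S : Finset (Fin n), 0 ≤ f S ∧ f S ≤ 1) (hc : ∀ a : Fin n, 0 < c a) :
    ∃ k : ℕ, k < 2 ^ n ∧ ∃ a : Fin (k + 1) → ℝ,
      a 0 = 0 ∧ StrictMono a ∧ a (Fin.last k) ≤ 1 ∧
      (∀ x ∈ Set.Icc (0 : ℝ) 1, ∃ i : Fin (k + 1),
        a i ≤ x ∧ (∀ j : Fin (k + 1), a j ≤ x → a j ≤ a i) ∧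
        Vfc n f c x = Vfc n f c (a i)) ∧
      (∀ i j : Fin (k + 1), i < j → Vfc n f c (a i) < Vfc n f c (a j)) := by
  classical
  set g := Vfc n f c with hg
  have hmonog : Monotone g := vfc_mono
  have hValsfin : (g '' Set.Icc 0 1).Finite := by
    have hsub : g '' Set.Icc 0 1 ⊆ Set.range f := by
      rintro v ⟨x, hx, rfl⟩
      obtain ⟨S, hS, hVS⟩ := vfc_spec (n := n) (f := f) (c := c) x
      exact ⟨S, hVS.symm⟩
    exact (Set.finite_range f).subset hsub
  have hValsne : (g '' Set.Icc 0 1).Nonempty :=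
    ⟨g 0, 0, ⟨le_refl 0, zero_le_one⟩, rfl⟩
  set s : Finset ℝ := hValsfin.toFinset with hs
  have hmem_s : ∀ v, v ∈ s ↔ v ∈ g '' Set.Icc 0 1 := by
    intro v; rw [hs, Set.Finite.mem_toFinset]
  have hsne : s.Nonempty := by
    obtain ⟨v, hv⟩ := hValsne; exact ⟨v, (hmem_s v).mpr hv⟩
  obtain ⟨k, hk⟩ : ∃ k, s.card = k + 1 :=
    ⟨s.card - 1, (Nat.succ_pred_eq_of_pos (Finset.card_pos.mpr hsne)).symm⟩
  have hklt : k < 2 ^ n := by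
    have hsub : s ⊆ Finset.image f Finset.univ := by
      intro v hv
      obtain ⟨x, hx, rfl⟩ := (hmem_s v).mp hv
      obtain ⟨S, hS, hVS⟩ := vfc_spec (n := n) (f := f) (c := c) x
      exact Finset.mem_image.mpr ⟨S, Finset.mem_univ _, hVS.symm⟩
    have h1 := Finset.card_le_card hsub
    have h2 : (Finset.image f Finset.univ).card ≤ 2 ^ n := by
      calc (Finset.image f Finset.univ).card
          ≤ (Finset.univ : Finset (Finset (Fin n))).card := Finset.card_image_le
        _ = 2 ^ n := by simp [Finset.card_univ, Fintype.card_finset]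
    omega
  refine ⟨k, hklt, ?_⟩
  set e : Fin (k + 1) → ℝ := fun i => (s.orderIsoOfFin hk i : ℝ) with he
  have hemono : StrictMono e := by
    intro i j hij
    exact_mod_cast (s.orderIsoOfFin hk).strictMono hij
  have hemem : ∀ i, ∃ x ∈ Set.Icc (0:ℝ) 1, g x = e i := by
    intro i
    have hmem : (e i) ∈ s := (s.orderIsoOfFin hk i).2
    exact (hmem_s _).mp hmem
  set a : Fin (k + 1) → ℝ := fun i => sInf {x ∈ Set.Icc (0:ℝ) 1 | g x = e i} with ha
  have haspec : ∀ i, (a i ∈ Set.Icc (0:ℝ) 1) ∧ g (a i) = e i := by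
    intro i
    have := levelset_inf_mem (n := n) (f := f) (c := c) (v := e i) (hemem i)
    exact this
  have hamono : StrictMono a := by
    intro i j hij
    have h1 : g (a i) < g (a j) := by
      rw [(haspec i).2, (haspec j).2]; exact hemono hij
    exact hmonog.reflect_lt h1
  have hainf_le : ∀ i, ∀ x ∈ Set.Icc (0:ℝ) 1, g x = e i → a i ≤ x := by
    intro i x hx hgx
    exact csInf_le ⟨0, fun y hy => hy.1.1⟩ ⟨hx, hgx⟩
  -- a 0 = 0
  have hg0 : g 0 = e 0 := by
    have hg0s : g 0 ∈ s := (hmem_s _).mpr ⟨0, ⟨le_refl 0, zero_le_one⟩, rfl⟩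
    set j := (s.orderIsoOfFin hk).symm ⟨g 0, hg0s⟩ with hj
    have hej : e j = g 0 := by
      have := (s.orderIsoOfFin hk).apply_symm_apply ⟨g 0, hg0s⟩
      exact congrArg Subtype.val this
    have h1 : e 0 ≤ g 0 := by
      rw [← hej]; exact hemono.monotone (Fin.zero_le j)
    have h2 : g 0 ≤ e 0 := by
      obtain ⟨x, hx, hgx⟩ := hemem 0
      rw [← hgx]; exact hmonog hx.1
    linarith
  have ha0 : a 0 = 0 := by
    have h1 : a 0 ≤ 0 := hainf_le 0 0 ⟨le_refl 0, zero_le_one⟩ hg0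
    exact le_antisymm h1 (haspec 0).1.1
  refine ⟨a, ha0, hamono, (haspec (Fin.last k)).1.2, ?_, ?_⟩
  · intro x hx
    have hgxs : g x ∈ s := (hmem_s _).mpr ⟨x, hx, rfl⟩
    set j := (s.orderIsoOfFin hk).symm ⟨g x, hgxs⟩ with hj
    have hej : e j = g x := by
      have := (s.orderIsoOfFin hk).apply_symm_apply ⟨g x, hgxs⟩
      exact congrArg Subtype.val this
    refine ⟨j, hainf_le j x hx hej.symm, ?_, ?_⟩
    · intro j' hj'
      have h1 : g (a j') ≤ g x := hmonog hj'
      rw [(haspec j').2, ← hej] at h1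
      exact hamono.monotone ((hemono.le_iff_le).mp h1)
    · rw [(haspec j).2, hej]
  · intro i j hij
    have := hemono hij
    rw [← (haspec i).2, ← (haspec j).2] at this
    exact this
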